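/- The Takagi function T is nowhere approximately derivable: for every x ∈ ℝ there is no real number L that is an approximate derivative of T at x. -/

import Mathlib

open MeasureTheory Filter Set

noncomputable section

/-- The set of dyadic numbers of level `n`: `{k / 2^n : k ∈ ℤ}`. -/
def Dset (n : ℕ) : Set ℝ := {y : ℝ | ∃ k : ℤ, y = (k : ℝ) / 2 ^ n}

/-- The set of all dyadic numbers. -/
def Ddyadic : Set ℝ := ⋃ n, Dset n

/-- `g k x = dist(x, D_k)`. -/
def g (k : ℕ) (x : ℝ) : ℝ := Metric.infDist x (Dset k)

/-- The Takagi function `T x = ∑_{k=1}^∞ g_k(x)`. -/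
def T (x : ℝ) : ℝ := ∑' k : ℕ, g (k + 1) x

/-- `G' n x = g_1'(x) + ⋯ + g_n'(x)` (so `G' 0 x = 0`). -/
def G' (n : ℕ) (x : ℝ) : ℝ := ∑ k ∈ Finset.range n, deriv (g (k + 1)) x

/-- `f` is approximately derivable at `x` with approximate derivative `L`:
for every `ε > 0`, the relative measure of the set of points `y` in `(x - r, x + r)`,
`y ≠ x`, where `|(f y - f x - L (y - x)) / (y - x)| ≥ ε`, divided by `2r`,
tends to `0` as `r → 0⁺`. -/
def ApproxDerivAt (f : ℝ → ℝ) (x L : ℝ) : Prop :=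
  ∀ ε > (0 : ℝ), Tendsto
    (fun r : ℝ => volume (Ioo (x - r) (x + r) ∩
        {y : ℝ | y ≠ x ∧ ε ≤ |(f y - f x - L * (y - x)) / (y - x)|}) /
      ENNReal.ofReal (2 * r))
    (nhdsWithin 0 (Ioi 0)) (nhds 0)

/-!
On a dyadic interval `[l, l + 2⁻ᵐ/2]`, the summands `g₁, …, gₘ` of `T` are affine, and by
`1/2`-periodicity the remaining tail is `2⁻ᵐ T(2ᵐ (y - l))`: so near every point and at every scale,
`T` is an affine function plus a copy of `T|[0, 1/2]` shrunk by `2⁻ᵐ`. The function `T` is small near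
`0` and `1/2` but close to `1/4` near `1/4`, so every line stays at distance `≥ 1/16` from `T` on one
of three intervals of length `2⁻⁸` in `[0, 1/2]`. Rescaled, this gives in every window
`(x - 2⁻ᵐ, x + 2⁻ᵐ)` a subinterval of relative length `2⁻⁹` on which the difference quotient of
`T` at `x` differs from any prescribed `L` by at least `1/8`, so the exceptional set never has
density `0`.
-/

open Function Topology

def AffineOn (f : ℝ → ℝ) (s : Set ℝ) : Prop := ∃ a b : ℝ, EqOn f (fun y => a + b * y) s

lemma AffineOn.mono {f : ℝ → ℝ} {s t : Set ℝ} (hf : AffineOn f t) (hst : s ⊆ t) :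
    AffineOn f s :=
  let ⟨a, b, h⟩ := hf; ⟨a, b, h.mono hst⟩

lemma AffineOn.sum {ι : Type*} (u : Finset ι) {f : ι → ℝ → ℝ} {s : Set ℝ}
    (hf : ∀ i ∈ u, AffineOn (f i) s) : AffineOn (fun y => ∑ i ∈ u, f i y) s := by
  choose! a b hab using hf
  refine ⟨∑ i ∈ u, a i, ∑ i ∈ u, b i, fun y hy => ?_⟩
  simp only [Finset.sum_congr rfl fun i hi => hab i hi hy, Finset.sum_add_distrib, Finset.sum_mul]

lemma exists_Ioo_le_abs_slope {f F : ℝ → ℝ} {l s a b δ η x L : ℝ} (hs : 0 < s)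
    (hf : ∀ y ∈ Icc l (l + s / 2), f y = a + b * y + s * F ((y - l) / s))
    (hF : ∀ α β : ℝ, ∃ u, 0 ≤ u ∧ u + δ ≤ 1 / 2 ∧ ∀ z ∈ Icc u (u + δ), η ≤ |F z - (α + β * z)|)
    (hx : x ∈ Icc l (l + s / 2)) :
    ∃ c, Ioo c (c + δ * s) ⊆ Ioo (x - s) (x + s) ∧
      ∀ y ∈ Ioo c (c + δ * s), y ≠ x → 2 * η ≤ |(f y - f x - L * (y - x)) / (y - x)| := by
  -- The line through `((x - l) / s, F ((x - l) / s))` of slope `L - b` makes the numerator of the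
  -- difference quotient `s` times the distance from `F` to that line.
  obtain ⟨u, hu₀, huδ, hfar⟩ := hF (F ((x - l) / s) - (L - b) * ((x - l) / s)) (L - b)
  have hJ : Ioo (l + u * s) (l + u * s + δ * s) ⊆ Icc l (l + s / 2) := fun y hy => by
    have : (u + δ) * s ≤ 1 / 2 * s := mul_le_mul_of_nonneg_right huδ hs.le
    constructor <;> nlinarith [hy.1, hy.2]
  refine ⟨l + u * s, fun y hy => ?_, fun y hy hyx => ?_⟩
  · have := hJ hy
    constructor <;> linarith [this.1, this.2, hx.1, hx.2]
  have hyI := hJ hy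
  have hzy : (y - l) / s ∈ Icc u (u + δ) := by
    rw [mem_Icc, le_div_iff₀ hs, div_le_iff₀ hs]
    constructor <;> linarith [hy.1, hy.2]
  have hnum : f y - f x - L * (y - x) =
      s * (F ((y - l) / s) - (F ((x - l) / s) - (L - b) * ((x - l) / s) +
        (L - b) * ((y - l) / s))) := by
    rw [hf y hyI, hf x hx]
    field_simp
    ring
  have hlow : s * η ≤ |f y - f x - L * (y - x)| := by
    rw [hnum, abs_mul, abs_of_pos hs]
    exact mul_le_mul_of_nonneg_left (hfar _ hzy) hs.le
  have hdist : |y - x| ≤ s / 2 := abs_le.2 ⟨by linarith [hyI.1, hx.2], by linarith [hyI.2, hx.1]⟩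
  rw [abs_div, le_div_iff₀ (abs_pos.2 (sub_ne_zero.2 hyx))]
  rcases le_or_gt η 0 with hη | hη
  · nlinarith [abs_nonneg (y - x), abs_nonneg (f y - f x - L * (y - x))]
  · nlinarith

theorem not_approxDerivAt_of_frequently {f : ℝ → ℝ} {x L ε c : ℝ} (hε : 0 < ε) (hc : 0 < c)
    (h : ∃ᶠ r in 𝓝[>] 0, ∃ a, Ioo a (a + c * r) ⊆ Ioo (x - r) (x + r) ∧
      ∀ y ∈ Ioo a (a + c * r), y ≠ x → ε ≤ |(f y - f x - L * (y - x)) / (y - x)|) :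
    ¬ ApproxDerivAt f x L := by
  intro hL
  have hsmall := (hL ε hε).eventually (Iio_mem_nhds (ENNReal.ofReal_pos.2 (half_pos hc)))
  obtain ⟨r, ⟨a, hsub, hbad⟩, hlt, hr : 0 < r⟩ :=
    (h.and_eventually (hsmall.and self_mem_nhdsWithin)).exists
  refine (not_le.2 hlt) ?_
  have hvol : ENNReal.ofReal (c * r) ≤ volume (Ioo (x - r) (x + r) ∩
      {y : ℝ | y ≠ x ∧ ε ≤ |(f y - f x - L * (y - x)) / (y - x)|}) :=
    calc ENNReal.ofReal (c * r) = volume (Ioo a (a + c * r) \ {x}) := by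
          rw [measure_sdiff_null (measure_singleton x), Real.volume_Ioo, add_sub_cancel_left]
      _ ≤ _ := measure_mono fun y hy => by exact ⟨hsub hy.1, hy.2, hbad y hy.1 hy.2⟩
  calc ENNReal.ofReal (c / 2) = ENNReal.ofReal (c * r) / ENNReal.ofReal (2 * r) := by
        rw [← ENNReal.ofReal_div_of_pos (by positivity)]
        congr 1
        field_simp
    _ ≤ _ := ENNReal.div_le_div_right hvol _

def distToInt (t : ℝ) : ℝ := |t - round t|

lemma distToInt_le_half (t : ℝ) : distToInt t ≤ 1 / 2 := abs_sub_round t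

lemma distToInt_le (t : ℝ) (n : ℤ) : distToInt t ≤ |t - n| := round_le t n

lemma distToInt_periodic : Periodic distToInt 1 := fun t => by
  simp only [distToInt, round_add_one, Int.cast_add, Int.cast_one, add_sub_add_right_eq_sub]

lemma distToInt_eq_of_abs_le {t : ℝ} {n : ℤ} (h : |t - n| ≤ 1 / 2) : distToInt t = |t - n| := by
  refine le_antisymm (distToInt_le t n) ?_
  by_cases hn : round t = n
  · rw [distToInt, hn]
  · have hfar : 1 ≤ |((round t - n : ℤ) : ℝ)| := by
      exact_mod_cast Int.one_le_abs (sub_ne_zero.mpr hn)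
    have := abs_sub_le (round t : ℝ) t n
    rw [abs_sub_comm (round t : ℝ) t] at this
    push_cast at hfar
    unfold distToInt
    linarith

lemma half_sub_abs_le_distToInt (t : ℝ) : 1 / 2 - |t - 1 / 2| ≤ distToInt t := by
  have hodd : 1 ≤ |2 * ((round t : ℝ) - 1 / 2)| := by
    have : (1 : ℤ) ≤ |2 * round t - 1| := Int.one_le_abs (by omega)
    rw [show 2 * ((round t : ℝ) - 1 / 2) = ((2 * round t - 1 : ℤ) : ℝ) by push_cast; ring]
    exact_mod_cast this
  have := abs_sub_le (round t : ℝ) t (1 / 2)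
  rw [abs_mul, abs_two] at hodd
  rw [abs_sub_comm (round t : ℝ) t] at this
  unfold distToInt
  linarith

lemma distToInt_affineOn (p : ℤ) : AffineOn distToInt (Icc (p / 2) ((p + 1) / 2)) := by
  obtain ⟨s, rfl | rfl⟩ := Int.even_or_odd' p
  · refine ⟨-s, 1, fun t ht => ?_⟩
    push_cast at ht
    have h0 : 0 ≤ t - s := by linarith [ht.1]
    rw [distToInt_eq_of_abs_le (n := s) (by rw [abs_of_nonneg h0]; linarith [ht.2]),
      abs_of_nonneg h0]
    ring
  · refine ⟨s + 1, -1, fun t ht => ?_⟩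
    push_cast at ht
    have h0 : t - (s + 1 : ℤ) ≤ 0 := by push_cast; linarith [ht.2]
    rw [distToInt_eq_of_abs_le (n := s + 1) (by rw [abs_of_nonpos h0]; push_cast; linarith [ht.1]),
      abs_of_nonpos h0]
    push_cast
    ring

lemma g_eq (j : ℕ) (y : ℝ) : g j y = distToInt (2 ^ j * y) / 2 ^ j := by
  have h2 : (0 : ℝ) < 2 ^ j := by positivity
  have hdist : ∀ k : ℤ, dist y (k / 2 ^ j) = |2 ^ j * y - k| / 2 ^ j := fun k => by
    rw [Real.dist_eq, eq_div_iff h2.ne', ← abs_of_pos h2, ← abs_mul, abs_of_pos h2]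
    congr 1
    field_simp
  have hmem : ((round (2 ^ j * y) : ℤ) : ℝ) / 2 ^ j ∈ Dset j := ⟨_, rfl⟩
  refine le_antisymm ?_ ((Metric.le_infDist ⟨_, hmem⟩).2 ?_)
  · simpa only [g, distToInt, hdist] using Metric.infDist_le_dist_of_mem (x := y) hmem
  · rintro _ ⟨k, rfl⟩
    rw [hdist]
    gcongr
    exact distToInt_le _ k

lemma g_nonneg (j : ℕ) (y : ℝ) : 0 ≤ g j y := Metric.infDist_nonneg

lemma g_le_abs (j : ℕ) (y : ℝ) : g j y ≤ |y| := by
  have h0 : (0 : ℝ) ∈ Dset j := ⟨0, by simp⟩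
  simpa [g] using Metric.infDist_le_dist_of_mem (x := y) h0

lemma g_le_half_pow (j : ℕ) (y : ℝ) : g j y ≤ (1 / 2) ^ (j + 1) := by
  rw [g_eq, div_le_iff₀ (by positivity), pow_succ, mul_right_comm, ← mul_pow]
  simpa using distToInt_le_half _

lemma g_add (j m : ℕ) (y : ℝ) : g (j + m) y = g j (2 ^ m * y) / 2 ^ m := by
  rw [g_eq, g_eq, pow_add, div_div, mul_assoc]

lemma g_periodic (j : ℕ) : Periodic (g j) (2 ^ j)⁻¹ := by
  intro y
  rw [g_eq, g_eq, mul_add, mul_inv_cancel₀ (by positivity), distToInt_periodic]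

lemma exists_Icc_div_two_pow_subset {k n : ℕ} (hkn : k ≤ n) (q : ℤ) :
    ∃ p : ℤ, Icc (q / 2 ^ n : ℝ) ((q + 1) / 2 ^ n) ⊆ Icc (p / 2 ^ k) ((p + 1) / 2 ^ k) := by
  have hd : (0 : ℤ) < 2 ^ (n - k) := by positivity
  have hlo : q / 2 ^ (n - k) * 2 ^ (n - k) ≤ q := Int.ediv_mul_le q hd.ne'
  have hhi : q + 1 ≤ (q / 2 ^ (n - k) + 1) * 2 ^ (n - k) := Int.lt_ediv_add_one_mul_self q hd
  have h2n : (2 : ℝ) ^ n = 2 ^ k * 2 ^ (n - k) := (pow_mul_pow_sub 2 hkn).symm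
  have hk : (0 : ℝ) < 2 ^ k := by positivity
  refine ⟨q / 2 ^ (n - k), Icc_subset_Icc ?_ ?_⟩
  · rw [div_le_div_iff₀ hk (by positivity), h2n, ← mul_assoc, mul_right_comm]
    exact mul_le_mul_of_nonneg_right (by exact_mod_cast hlo) hk.le
  · rw [div_le_div_iff₀ (by positivity) hk, h2n, ← mul_assoc, mul_right_comm (_ + 1 : ℝ)]
    exact mul_le_mul_of_nonneg_right (by exact_mod_cast hhi) hk.le

lemma g_affineOn {j n : ℕ} (hjn : j < n) (q : ℤ) :
    AffineOn (g j) (Icc (q / 2 ^ n) ((q + 1) / 2 ^ n)) := by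
  obtain ⟨p, hsub⟩ := exists_Icc_div_two_pow_subset hjn q
  obtain ⟨a, b, hab⟩ := distToInt_affineOn p
  refine AffineOn.mono ⟨a / 2 ^ j, b, fun y hy => ?_⟩ hsub
  have hscale (c : ℝ) : 2 ^ j * (c / 2 ^ (j + 1)) = c / 2 := by rw [pow_succ]; field_simp
  have hy' : 2 ^ j * y ∈ Icc (p / 2 : ℝ) ((p + 1) / 2) := by
    rw [← hscale, ← hscale]
    exact ⟨by gcongr; exact hy.1, by gcongr; exact hy.2⟩
  simp only [g_eq, hab hy']
  field_simp

lemma summable_g (y : ℝ) : Summable fun k => g (k + 1) y :=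
  (summable_geometric_two.mul_left (1 / 4)).of_nonneg_of_le (fun k => g_nonneg _ _) fun k =>
    (g_le_half_pow _ _).trans_eq (by ring)

lemma T_le_half (y : ℝ) : T y ≤ 1 / 2 := by
  have hgeom := summable_geometric_two.mul_left (1 / 4)
  calc T y ≤ ∑' k : ℕ, 1 / 4 * (1 / 2 : ℝ) ^ k :=
        (summable_g y).tsum_le_tsum (fun k => (g_le_half_pow _ _).trans_eq (by ring)) hgeom
    _ = 1 / 2 := by rw [tsum_mul_left, tsum_geometric_two]; norm_num

lemma T_eq_sum_add (m : ℕ) (y : ℝ) :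
    T y = ∑ k ∈ Finset.range m, g (k + 1) y + T (2 ^ m * y) / 2 ^ m := by
  rw [T, ← (summable_g y).sum_add_tsum_nat_add m, T, ← tsum_div_const]
  congr 2 with k
  rw [add_right_comm, g_add]

lemma T_periodic : Periodic T (1 / 2) := fun y => by
  refine tsum_congr fun k => ?_
  have hhalf : (1 / 2 : ℝ) = (2 ^ k : ℕ) * (2 ^ (k + 1))⁻¹ := by
    rw [pow_succ]; push_cast; field_simp
  rw [hhalf, (g_periodic (k + 1)).nat_mul]

lemma T_le_mul_abs_add (n : ℕ) (z : ℝ) : T z ≤ n * |z| + (1 / 2) ^ (n + 1) := by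
  have hsum : ∑ k ∈ Finset.range n, g (k + 1) z ≤ n * |z| := by
    simpa using Finset.sum_le_sum fun k (_ : k ∈ Finset.range n) => g_le_abs (k + 1) z
  have htail : T (2 ^ n * z) / 2 ^ n ≤ (1 / 2) ^ (n + 1) := by
    rw [div_le_iff₀ (by positivity), pow_succ, mul_right_comm, ← mul_pow]
    simpa using T_le_half _
  rw [T_eq_sum_add n]
  linarith

lemma quarter_sub_abs_le_T (z : ℝ) : 1 / 4 - |z - 1 / 4| ≤ T z := by
  have hg1 : g 1 z ≤ T z := (summable_g z).le_tsum 0 fun k _ => g_nonneg _ _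
  have h := half_sub_abs_le_distToInt (2 * z)
  rw [show 2 * z - 1 / 2 = 2 * (z - 1 / 4) by ring, abs_mul, abs_two] at h
  rw [g_eq, pow_one] at hg1
  linarith

lemma T_far_from_lines (α β : ℝ) : ∃ u, 0 ≤ u ∧ u + (1 / 2) ^ 8 ≤ 1 / 2 ∧
    ∀ z ∈ Icc u (u + (1 / 2) ^ 8), 1 / 16 ≤ |T z - (α + β * z)| := by
  by_contra! hnear
  obtain ⟨z₁, ⟨hz₁, hz₁'⟩, h₁⟩ := hnear 0 le_rfl (by norm_num)
  obtain ⟨z₂, ⟨hz₂, hz₂'⟩, h₂⟩ := hnear (1 / 4) (by norm_num) (by norm_num)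
  obtain ⟨z₃, ⟨hz₃, hz₃'⟩, h₃⟩ := hnear (1 / 2 - (1 / 2) ^ 8) (by norm_num) (by norm_num)
  have hT₁ : T z₁ ≤ 8 * (1 / 2) ^ 8 + (1 / 2) ^ 9 := by
    have := T_le_mul_abs_add 8 z₁
    rw [abs_of_nonneg hz₁] at this
    push_cast at this
    linarith
  have hT₃ : T z₃ ≤ 8 * (1 / 2) ^ 8 + (1 / 2) ^ 9 := by
    have := T_le_mul_abs_add 8 (z₃ - 1 / 2)
    rw [T_periodic.sub_eq, abs_of_nonpos (by linarith)] at this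
    push_cast at this
    linarith
  have hT₂ : 1 / 4 - (1 / 2) ^ 8 ≤ T z₂ := by
    have := quarter_sub_abs_le_T z₂
    rw [abs_of_nonneg (by linarith)] at this
    linarith
  rw [abs_lt] at h₁ h₂ h₃
  rcases le_total 0 β with hβ | hβ
  · linarith [mul_le_mul_of_nonneg_left (show z₂ ≤ z₃ by linarith) hβ]
  · linarith [mul_le_mul_of_nonpos_left (show z₁ ≤ z₂ by linarith) hβ]

lemma exists_T_eq_affine_add_rescale (m : ℕ) (x : ℝ) :
    ∃ l a b : ℝ, x ∈ Icc l (l + (2 ^ m)⁻¹ / 2) ∧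
      ∀ y ∈ Icc l (l + (2 ^ m)⁻¹ / 2), T y = a + b * y + (2 ^ m)⁻¹ * T ((y - l) / (2 ^ m)⁻¹) := by
  set q := ⌊2 ^ (m + 1) * x⌋
  set l : ℝ := q / 2 ^ (m + 1)
  have h2 : (0 : ℝ) < 2 ^ (m + 1) := by positivity
  have hI : Icc l (l + (2 ^ m)⁻¹ / 2) = Icc ((q : ℝ) / 2 ^ (m + 1)) ((q + 1) / 2 ^ (m + 1)) := by
    simp only [l, pow_succ]; congr 1; field_simp
  obtain ⟨a, b, hab⟩ := AffineOn.sum (Finset.range m) (f := fun k => g (k + 1))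
    fun k hk => g_affineOn (Nat.succ_lt_succ (Finset.mem_range.1 hk)) q
  refine ⟨l, a, b, ?_, fun y hy => ?_⟩
  · rw [hI, mem_Icc, div_le_iff₀ h2, le_div_iff₀ h2, mul_comm x]
    exact ⟨Int.floor_le _, (Int.lt_floor_add_one _).le⟩
  · have hS : ∑ k ∈ Finset.range m, g (k + 1) y = a + b * y := hab (hI ▸ hy)
    rw [T_eq_sum_add m, hS, div_eq_inv_mul (T _), ← T_periodic.int_mul q ((y - l) / (2 ^ m)⁻¹)]
    congr 3
    simp only [l, pow_succ]
    field_simp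
    ring

theorem takagi_nowhere_approx_derivable (x : ℝ) :
    ¬ ∃ L : ℝ, ApproxDerivAt T x L := by
  rintro ⟨L, hL⟩
  have hscales : Tendsto (fun m : ℕ => ((2 : ℝ) ^ m)⁻¹) atTop (𝓝[>] 0) :=
    tendsto_inv_atTop_nhdsGT_zero.comp (tendsto_pow_atTop_atTop_of_one_lt one_lt_two)
  refine not_approxDerivAt_of_frequently (ε := 2 * (1 / 16)) (c := (1 / 2) ^ 8)
    (by norm_num) (by norm_num) (hscales.frequently (Frequently.of_forall fun m => ?_)) hL
  obtain ⟨l, a, b, hx, hT⟩ := exists_T_eq_affine_add_rescale m x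
  exact exists_Ioo_le_abs_slope (by positivity) hT T_far_from_lines hx
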